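/- arXiv:1208.1627 — 4 statements merged into one kernel-verified Lean document; each statement's English description precedes it below -/
import Mathlib

section
/- Let q be a power of a prime, let F be the finite field with q² elements, and let 2 ≤ d ≤ q. Then the number of codewords of weight exactly d of the corner code H^0_d equals q²·(q² − 1)·C(q, d−1)·(q³ − d + 1)/d, where C(q,d−1) is the binomial coefficient. -/
/-- `z : F × F → F` is a codeword of the Hermitian code `H^j_d`: it vanishes outside the
Hermitian curve `x^(q+1) = y^q + y` and is orthogonal to the evaluations of the monomials
`x^r y^s` with `r + s ≤ d - 2` or `(r, s) = (d - 1 - i, i)` for some `0 ≤ i < j`. -/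
def hermitianCodeword (q d j : ℕ) {F : Type*} [Field F] [Fintype F] [DecidableEq F]
    (z : F × F → F) : Prop :=
  (∀ p : F × F, p.1 ^ (q + 1) ≠ p.2 ^ q + p.2 → z p = 0) ∧
  ∀ r s : ℕ, (r + s ≤ d - 2 ∨ ∃ i < j, r = d - 1 - i ∧ s = i) →
    ∑ p ∈ Finset.univ.filter (fun p : F × F => p.1 ^ (q + 1) = p.2 ^ q + p.2),
      z p * p.1 ^ r * p.2 ^ s = 0

/-- The weight of a codeword: the number of points where it does not vanish. -/
def hermitianWeight {F : Type*} [Field F] [Fintype F] [DecidableEq F]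
    (z : F × F → F) : ℕ :=
  (Finset.univ.filter (fun p : F × F => z p ≠ 0)).card

open Finset Polynomial

/-!
A weight-`d` codeword of `H^0_d` is orthogonal, on its support `S`, to every monomial of degree
at most `d - 2`. If `S` were not collinear, a product of `d - 2` affine forms vanishing on all of
`S` but one point would violate this; so `S` lies on a line. Parametrising the line turns the
conditions into the vanishing of the power sums of degree `≤ d - 2` at `d` distinct nodes, whose
solutions are the multiples of the nodal weights of Lagrange interpolation: every collinear
`d`-subset of the curve supports exactly `q² - 1` codewords.

A vertical line meets the curve in `q` points, and the line `y = a x + b` in `1` or `q + 1`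
points according as `a^(q+1) + b^q + b` vanishes or not, the first case occurring for `q³` of the
`q⁴` pairs `(a, b)`. These counts are fibres of the trace `y ↦ y^q + y` and of the norm
`u ↦ u^(q+1)`, which map into the subfield of order `q`; as no fibre exceeds the degree of the
map, counting the source shows that every fibre over that subfield is as large as possible.
-/

theorem card_fiber_eq_of_card_eq_mul {α β : Type*} [DecidableEq β] {s : Finset α}
    {t : Finset β} {f : α → β} {m n : ℕ} (hf : ∀ a ∈ s, f a ∈ t) (ht : #t ≤ m)
    (hfib : ∀ b ∈ t, #{a ∈ s | f a = b} ≤ n) (hs : #s = m * n) {b : β} (hb : b ∈ t) :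
    #{a ∈ s | f a = b} = n := by
  by_contra hne
  have hlt : ∑ b ∈ t, #{a ∈ s | f a = b} < ∑ _b ∈ t, n :=
    sum_lt_sum hfib ⟨b, hb, lt_of_le_of_ne (hfib b hb) hne⟩
  rw [← card_eq_sum_card_fiberwise hf, sum_const, smul_eq_mul] at hlt
  have := Nat.mul_le_mul_right n ht
  omega

theorem Polynomial.card_le_natDegree_of_forall_isRoot {R : Type*} [CommRing R] [IsDomain R]
    {P : R[X]} (hP : P ≠ 0) {Z : Finset R} (h : ∀ x ∈ Z, P.IsRoot x) : #Z ≤ P.natDegree :=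
  card_le_degree_of_subset_roots fun x hx => (mem_roots hP).2 (h x hx)

section PowerSums

open Lagrange

variable {F ι : Type*} [Field F] {s : Finset ι} {v : ι → F} {c : ι → F} {n : ℕ}

theorem sum_mul_eval_eq_zero (hc : ∀ k ≤ n, ∑ i ∈ s, c i * v i ^ k = 0) {g : F[X]}
    (hg : g.natDegree ≤ n) : ∑ i ∈ s, c i * g.eval (v i) = 0 := by
  simp only [eval_eq_sum_range' (Nat.lt_succ_of_le hg), mul_sum]
  rw [sum_comm]
  refine sum_eq_zero fun k hk => ?_
  rw [← mul_zero (g.coeff k), ← hc k (Nat.lt_succ_iff.1 (mem_range.1 hk)), mul_sum]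
  exact sum_congr rfl fun i _ => by ring

variable [DecidableEq ι]

theorem sum_nodalWeight_mul_pow_eq_zero (hvs : Set.InjOn v s) {k : ℕ} (hk : k + 2 ≤ #s) :
    ∑ i ∈ s, nodalWeight s v i * v i ^ k = 0 := by
  -- compare the coefficients of `X ^ (#s - 1)` in `X ^ k` and in its Lagrange interpolant
  have hXk : (X ^ k : F[X]) = interpolate s v (fun i => v i ^ k) :=
    eq_interpolate_of_eval_eq _ hvs (by rw [degree_X_pow]; exact_mod_cast (by omega : k < #s))
      fun i _ => by simp
  have hco := congrArg (coeff · (#s - 1)) hXk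
  simp only [interpolate_apply, coeff_X_pow, if_neg (by omega : #s - 1 ≠ k), finsetSum_coeff,
    coeff_C_mul] at hco
  rw [hco]
  refine sum_congr rfl fun i hi => ?_
  rw [basis_eq_prod_sub_inv_mul_nodal_div hi, ← nodal_erase_eq_nodal_div hi, coeff_C_mul,
    show #s - 1 = (nodal (s.erase i) v).natDegree by rw [natDegree_nodal, card_erase_of_mem hi],
    nodal_monic.coeff_natDegree, mul_one, mul_comm]

theorem eq_zero_of_sum_mul_pow_eq_zero (hvs : Set.InjOn v s) (hs : #s = n + 2) {m : ι}
    (hm : m ∈ s) (hcm : c m = 0) (hc : ∀ k ≤ n, ∑ i ∈ s, c i * v i ^ k = 0) {i : ι}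
    (hi : i ∈ s) : c i = 0 := by
  by_cases him : i = m
  · rwa [him]
  have hi' : i ∈ s.erase m := mem_erase.2 ⟨him, hi⟩
  have hvs' : Set.InjOn v (s.erase m) := hvs.mono (coe_subset.2 (erase_subset m s))
  have h := sum_mul_eval_eq_zero hc (g := Lagrange.basis (s.erase m) v i)
    (by rw [natDegree_basis hvs' hi', card_erase_of_mem hm, hs]; omega)
  rwa [← sum_erase_add s _ hm, hcm, zero_mul, add_zero, sum_eq_single_of_mem i hi'
    (fun j hj hji => by rw [eval_basis_of_ne (Ne.symm hji) hj, mul_zero]),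
    eval_basis_self hvs' hi', mul_one] at h

theorem exists_eq_mul_nodalWeight (hvs : Set.InjOn v s) (hs : #s = n + 2)
    (hc : ∀ k ≤ n, ∑ i ∈ s, c i * v i ^ k = 0) :
    ∃ t : F, ∀ i ∈ s, c i = t * nodalWeight s v i := by
  obtain ⟨m, hm⟩ := card_pos.1 (by omega : 0 < #s)
  refine ⟨c m / nodalWeight s v m, fun i hi => sub_eq_zero.1 ?_⟩
  refine eq_zero_of_sum_mul_pow_eq_zero (c := fun i => c i - _ * nodalWeight s v i) hvs hs hm
    (by rw [div_mul_cancel₀ _ (nodalWeight_ne_zero hvs hm), sub_self]) (fun k hk => ?_) hi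
  simp only [sub_mul, sum_sub_distrib, mul_assoc, ← mul_sum, hc k hk,
    sum_nodalWeight_mul_pow_eq_zero hvs (by omega : k + 2 ≤ #s), mul_zero, sub_zero]

theorem card_filter_support_eq_and_sum_mul_pow_eq_zero [Fintype ι] [Fintype F]
    [DecidableEq F] (hvs : Set.InjOn v s) (hs : #s = n + 2) :
    #{c : ι → F | (∀ i, c i ≠ 0 ↔ i ∈ s) ∧ ∀ k ≤ n, ∑ i ∈ s, c i * v i ^ k = 0}
      = Fintype.card F - 1 := by
  let w : ι → F := fun i => if i ∈ s then nodalWeight s v i else 0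
  obtain ⟨m, hm⟩ := card_pos.1 (by omega : 0 < #s)
  have hwm : w m ≠ 0 := by simpa [w, hm] using nodalWeight_ne_zero hvs hm
  have himage : ({c : ι → F | (∀ i, c i ≠ 0 ↔ i ∈ s) ∧ ∀ k ≤ n, ∑ i ∈ s, c i * v i ^ k = 0} :
      Finset (ι → F)) = (univ.erase (0 : F)).image (fun t => t • w) := by
    ext c
    simp only [mem_filter, mem_univ, true_and, mem_image, mem_erase, and_true]
    constructor
    · rintro ⟨hcs, hc⟩
      obtain ⟨t, ht⟩ := exists_eq_mul_nodalWeight hvs hs hc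
      refine ⟨t, fun h0 => (hcs m).2 hm (by simp [ht m hm, h0]), funext fun i => ?_⟩
      by_cases hi : i ∈ s
      · simp [w, hi, ht i hi]
      · simpa [w, hi, eq_comm] using (hcs i).not.2 hi
    · rintro ⟨t, ht, rfl⟩
      refine ⟨fun i => ?_, fun k hk => ?_⟩
      · by_cases hi : i ∈ s <;> simp [w, hi, ht, nodalWeight_ne_zero hvs]
      · simp only [Pi.smul_apply, smul_eq_mul, w, mul_assoc, ← mul_sum]
        rw [sum_congr rfl fun i hi => by rw [if_pos hi],
          sum_nodalWeight_mul_pow_eq_zero hvs (by omega), mul_zero]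
  rw [himage, card_image_of_injective _ fun a b hab => mul_right_cancel₀ hwm (congrFun hab m),
    card_erase_of_mem (mem_univ 0), card_univ]

end PowerSums

section Lines

variable {F : Type*} [Field F]

def OnLine : F ⊕ F × F → F × F → Prop
  | .inl c, p => p.1 = c
  | .inr ab, p => p.2 = ab.1 * p.1 + ab.2

instance [DecidableEq F] : ∀ L : F ⊕ F × F, DecidablePred (OnLine L)
  | .inl c => fun p => inferInstanceAs (Decidable (p.1 = c))
  | .inr ab => fun p => inferInstanceAs (Decidable (p.2 = ab.1 * p.1 + ab.2))

@[simp]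
theorem onLine_inl {c : F} {p : F × F} : OnLine (.inl c) p ↔ p.1 = c := Iff.rfl

@[simp]
theorem onLine_inr {a b : F} {p : F × F} : OnLine (.inr (a, b)) p ↔ p.2 = a * p.1 + b := Iff.rfl

def lineParam : F ⊕ F × F → F × F → F
  | .inl _, p => p.2
  | .inr _, p => p.1

theorem injOn_lineParam (L : F ⊕ F × F) : Set.InjOn (lineParam L) {p | OnLine L p} := by
  rintro p hp p' hp' h
  rcases L with c | ⟨a, b⟩
  · exact Prod.ext (hp.trans hp'.symm) h
  · exact Prod.ext h (by rw [hp, hp', show p.1 = p'.1 from h])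

theorem eq_of_onLine_of_ne {L₁ L₂ : F ⊕ F × F} {p p' : F × F} (hne : p ≠ p')
    (h₁ : OnLine L₁ p) (h₁' : OnLine L₁ p') (h₂ : OnLine L₂ p) (h₂' : OnLine L₂ p') :
    L₁ = L₂ := by
  rcases L₁ with c₁ | ⟨a₁, b₁⟩ <;> rcases L₂ with c₂ | ⟨a₂, b₂⟩ <;>
    simp only [OnLine] at h₁ h₁' h₂ h₂'
  · rw [← h₁, h₂]
  · exact absurd (Prod.ext (h₁.trans h₁'.symm) (by rw [h₂, h₂', h₁, h₁'])) hne
  · exact absurd (Prod.ext (h₂.trans h₂'.symm) (by rw [h₁, h₁', h₂, h₂'])) hne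
  · have hx : p.1 - p'.1 ≠ 0 :=
      sub_ne_zero.2 fun hx => hne (Prod.ext hx (by rw [h₁, h₁', hx]))
    obtain rfl : a₁ = a₂ := mul_right_cancel₀ hx (by linear_combination -h₁ + h₁' + h₂ - h₂')
    obtain rfl : b₁ = b₂ := by linear_combination h₂ - h₁
    rfl

theorem exists_onLine_iff {m p₁ : F × F} (h : m ≠ p₁) : ∃ L : F ⊕ F × F,
    ∀ p, OnLine L p ↔ (p₁.1 - m.1) * (p.2 - m.2) = (p₁.2 - m.2) * (p.1 - m.1) := by
  by_cases hx : p₁.1 = m.1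
  · have hy : p₁.2 - m.2 ≠ 0 := sub_ne_zero.2 fun hy => h (Prod.ext hx.symm hy.symm)
    refine ⟨.inl m.1, fun p => ?_⟩
    simp only [OnLine, hx, sub_self, zero_mul, zero_eq_mul, hy, false_or, sub_eq_zero]
  · have hx' : p₁.1 - m.1 ≠ 0 := sub_ne_zero.2 hx
    refine ⟨.inr ((p₁.2 - m.2) / (p₁.1 - m.1), m.2 - (p₁.2 - m.2) / (p₁.1 - m.1) * m.1),
      fun p => ?_⟩
    simp only [OnLine]
    constructor <;> intro hp
    · rw [hp]; field_simp; ring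
    · field_simp
      linear_combination hp

end Lines

section Moments

variable {F : Type*} [Field F]

def IsAffine (f : F × F → F) : Prop :=
  ∃ α β γ : F, ∀ p, f p = α * p.1 + β * p.2 + γ

def VanishingMoments (S : Finset (F × F)) (z : F × F → F) (n : ℕ) : Prop :=
  ∀ r s : ℕ, r + s ≤ n → ∑ p ∈ S, z p * p.1 ^ r * p.2 ^ s = 0

variable {S : Finset (F × F)} {z : F × F → F} {n : ℕ}

theorem VanishingMoments.mul_affine (h : VanishingMoments S z (n + 1)) {f : F × F → F}
    (hf : IsAffine f) : VanishingMoments S (fun p => z p * f p) n := by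
  obtain ⟨α, β, γ, hf⟩ := hf
  intro r s hrs
  calc ∑ p ∈ S, z p * f p * p.1 ^ r * p.2 ^ s
      = α * ∑ p ∈ S, z p * p.1 ^ (r + 1) * p.2 ^ s
        + β * ∑ p ∈ S, z p * p.1 ^ r * p.2 ^ (s + 1)
        + γ * ∑ p ∈ S, z p * p.1 ^ r * p.2 ^ s := by
        simp only [mul_sum, ← sum_add_distrib, hf]
        exact sum_congr rfl fun p _ => by ring
    _ = 0 := by rw [h _ _ (by omega), h _ _ (by omega), h _ _ (by omega)]; ring

theorem VanishingMoments.sum_mul_prod_eq_zero {ι : Type*} [DecidableEq ι]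
    {ℓ : ι → F × F → F} (hℓ : ∀ i, IsAffine (ℓ i)) {T : Finset ι}
    (h : VanishingMoments S z n) (hT : #T ≤ n) : ∑ p ∈ S, z p * ∏ i ∈ T, ℓ i p = 0 := by
  induction T using Finset.induction_on generalizing z n with
  | empty => simpa using h 0 0 (Nat.zero_le _)
  | insert a T ha ih =>
    rw [card_insert_of_notMem ha] at hT
    obtain ⟨n, rfl⟩ : ∃ k, n = k + 1 := ⟨n - 1, by omega⟩
    simpa only [prod_insert ha, mul_assoc] using ih (h.mul_affine (hℓ a)) (by omega)

end Moments

section Collinear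

variable {F : Type*} [Field F] [DecidableEq F] {S : Finset (F × F)} {z : F × F → F} {n : ℕ}

theorem exists_onLine_of_vanishingMoments (hS : #S = n + 2) (hz : ∀ p ∈ S, z p ≠ 0)
    (h : VanishingMoments S z n) : ∃ L : F ⊕ F × F, ∀ p ∈ S, OnLine L p := by
  by_contra! hcol
  obtain ⟨m, hm, p₁, hp₁, hmp₁⟩ := one_lt_card.1 (by omega : 1 < #S)
  obtain ⟨L, hL⟩ := exists_onLine_iff hmp₁
  obtain ⟨p₂, hp₂, hp₂L⟩ := hcol L
  rw [hL] at hp₂L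
  have hmp₂ : p₂ ≠ m := by rintro rfl; exact hp₂L (by ring)
  have hp₁p₂ : p₂ ≠ p₁ := by rintro rfl; exact hp₂L (by ring)
  -- `ℓ₀` vanishes on the line through `p₁, p₂`, and `ℓ x` on a line through `x` missing `m`
  let ℓ₀ : F × F → F :=
    fun p => (p₂.1 - p₁.1) * (p.2 - p₁.2) - (p₂.2 - p₁.2) * (p.1 - p₁.1)
  let ℓ : F × F → F × F → F := fun x p => if x.1 = m.1 then p.2 - x.2 else p.1 - x.1
  have hℓ₀ : IsAffine ℓ₀ := ⟨-(p₂.2 - p₁.2), p₂.1 - p₁.1,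
    (p₂.2 - p₁.2) * p₁.1 - (p₂.1 - p₁.1) * p₁.2, fun p => by ring⟩
  have hℓ : ∀ x, IsAffine (ℓ x) := fun x => by
    by_cases hx : x.1 = m.1
    · exact ⟨0, 1, -x.2, fun p => by simp only [ℓ, if_pos hx]; ring⟩
    · exact ⟨1, 0, -x.1, fun p => by simp only [ℓ, if_neg hx]; ring⟩
  have hℓm : ∀ x ≠ m, ℓ x m ≠ 0 := fun x hxm => by
    by_cases hx : x.1 = m.1
    · simp only [ℓ, if_pos hx]; exact sub_ne_zero.2 fun hy => hxm (Prod.ext hx hy.symm)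
    · simp only [ℓ, if_neg hx]; exact sub_ne_zero.2 (Ne.symm hx)
  set T := ((S.erase m).erase p₁).erase p₂ with hT
  have hTcard : #T = n - 1 := by
    rw [hT, card_erase_of_mem (by simp [hp₁p₂, hmp₂, hp₂]),
      card_erase_of_mem (by simp [hmp₁.symm, hp₁]), card_erase_of_mem hm, hS]
    omega
  obtain ⟨k, rfl⟩ : ∃ k, n = k + 1 := ⟨n - 1, by
    have : 2 < #S := two_lt_card.2 ⟨m, hm, p₁, hp₁, p₂, hp₂, hmp₁, hmp₂.symm, hp₁p₂.symm⟩
    omega⟩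
  have hsum := (h.mul_affine hℓ₀).sum_mul_prod_eq_zero hℓ (T := T) (by omega)
  rw [sum_eq_single_of_mem m hm] at hsum
  · refine mul_ne_zero (mul_ne_zero (hz m hm) ?_)
      (prod_ne_zero_iff.2 fun x hx => hℓm x ?_) hsum
    · intro h0; exact hp₂L (by linear_combination h0)
    · exact ((mem_erase.1 (mem_erase.1 (mem_erase.1 hx).2).2)).1
  · intro p hp hpm
    by_cases h₁ : p = p₁
    · subst h₁; simp [ℓ₀]
    by_cases h₂ : p = p₂
    · subst h₂; simp only [ℓ₀]; ring
    rw [prod_eq_zero (i := p) (by simp [hT, h₁, h₂, hpm, hp]) (by simp [ℓ]), mul_zero]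

end Collinear

section LineFibers

variable {F : Type*} [Field F] {S : Finset (F × F)} {z : F × F → F} {n : ℕ}
  {L : F ⊕ F × F}

theorem vanishingMoments_iff_of_onLine (hL : ∀ p ∈ S, OnLine L p) :
    VanishingMoments S z n ↔ ∀ k ≤ n, ∑ p ∈ S, z p * lineParam L p ^ k = 0 := by
  constructor
  · intro h k hk
    rcases L with c | ⟨a, b⟩
    · simpa [lineParam] using h 0 k (by omega)
    · simpa [lineParam] using h k 0 (by omega)
  · intro h r s hrs
    rcases L with c | ⟨a, b⟩
    · rw [← sum_mul_eval_eq_zero h (g := C (c ^ r) * X ^ s)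
        ((natDegree_C_mul_X_pow_le _ _).trans (by omega))]
      refine sum_congr rfl fun p hp => ?_
      simp [lineParam, ← show p.1 = c from hL p hp, mul_assoc]
    · rw [← sum_mul_eval_eq_zero h (g := X ^ r * (C a * X + C b) ^ s) (natDegree_mul_le.trans
        (by grw [natDegree_X_pow_le, natDegree_pow_le, natDegree_linear_le]; omega))]
      refine sum_congr rfl fun p hp => ?_
      simp [lineParam, ← show p.2 = a * p.1 + b from hL p hp, mul_assoc]

theorem card_filter_support_eq_and_vanishingMoments [Fintype F] [DecidableEq F]
    [DecidablePred (VanishingMoments S · n)] (hL : ∀ p ∈ S, OnLine L p) (hS : #S = n + 2) :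
    #{z : F × F → F | (∀ p, z p ≠ 0 ↔ p ∈ S) ∧ VanishingMoments S z n}
      = Fintype.card F - 1 := by
  rw [← card_filter_support_eq_and_sum_mul_pow_eq_zero
    ((injOn_lineParam L).mono fun p hp => hL p hp) hS]
  simp only [vanishingMoments_iff_of_onLine hL]

end LineFibers

section FiniteField

variable {F : Type*} [Field F] [Fintype F] {q : ℕ}

theorem add_pow_of_isPrimePow (hq : IsPrimePow q) (hF : Fintype.card F = q ^ 2) (a b : F) :
    (a + b) ^ q = a ^ q + b ^ q := by
  obtain ⟨p, k, hp, hk, rfl⟩ := hq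
  have hdvd : ringChar F ∣ p ^ (k * 2) := by
    rw [← ringChar.spec, pow_mul, ← hF, FiniteField.cast_card_eq_zero]
  have hchar : ringChar F = p :=
    (Nat.prime_dvd_prime_iff_eq (CharP.char_is_prime F _) hp.nat_prime).1
      ((CharP.char_is_prime F _).dvd_of_dvd_pow hdvd)
  have : Fact p.Prime := ⟨hp.nat_prime⟩
  have : CharP F p := hchar ▸ ringChar.charP F
  exact add_pow_char_pow a b p k

theorem pow_pow_eq_self_of_card_eq_sq (hF : Fintype.card F = q ^ 2) (a : F) :
    (a ^ q) ^ q = a := by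
  rw [← pow_mul, ← sq, ← hF, FiniteField.pow_card]

theorem two_le_of_card_eq_sq (hF : Fintype.card F = q ^ 2) : 2 ≤ q := by
  have := Fintype.one_lt_card (α := F)
  by_contra! h
  interval_cases q <;> simp_all

end FiniteField

section Hermitian

theorem sub_pow_of_add_pow {R : Type*} [Ring R] {q : ℕ}
    (hadd : ∀ a b : R, (a + b) ^ q = a ^ q + b ^ q) (a b : R) : (a - b) ^ q = a ^ q - b ^ q :=
  eq_sub_of_add_eq (by rw [← hadd, sub_add_cancel])

variable {F : Type*} [Field F] [Fintype F] {q : ℕ}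

theorem pow_add_self_pow_eq_self (hadd : ∀ a b : F, (a + b) ^ q = a ^ q + b ^ q)
    (hF : Fintype.card F = q ^ 2) (b : F) : (b ^ q + b) ^ q = b ^ q + b := by
  rw [hadd, pow_pow_eq_self_of_card_eq_sq hF, add_comm]

theorem pow_succ_pow_eq_self (hF : Fintype.card F = q ^ 2) (u : F) :
    (u ^ (q + 1)) ^ q = u ^ (q + 1) := by
  rw [pow_succ, mul_pow, pow_pow_eq_self_of_card_eq_sq hF, mul_comm, ← pow_succ]

variable [DecidableEq F]

theorem card_pow_add_self_eq (hadd : ∀ a b : F, (a + b) ^ q = a ^ q + b ^ q)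
    (hF : Fintype.card F = q ^ 2) {β : F} (hβ : β ^ q = β) : #{y : F | y ^ q + y = β} = q := by
  have hq := two_le_of_card_eq_sq hF
  refine card_fiber_eq_of_card_eq_mul (t := {x : F | x ^ q = x}) (m := q)
    (fun y _ => by simpa using pow_add_self_pow_eq_self hadd hF y) ?_ (fun b _ => ?_)
    (by rw [card_univ, hF, sq]) (by simpa using hβ)
  · calc #{x : F | x ^ q = x} ≤ (X ^ q - X : F[X]).natDegree :=
          card_le_natDegree_of_forall_isRoot (FiniteField.X_pow_card_sub_X_ne_zero F (by omega))
            fun x hx => by simpa [sub_eq_zero] using hx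
      _ = q := FiniteField.X_pow_card_sub_X_natDegree_eq F (by omega)
  · have hdeg : (X ^ q + X - C b : F[X]).natDegree = q := by
      rw [natDegree_sub_C, natDegree_add_eq_left_of_natDegree_lt] <;> simp; omega
    calc #{y ∈ univ | y ^ q + y = b} ≤ (X ^ q + X - C b : F[X]).natDegree :=
          card_le_natDegree_of_forall_isRoot (ne_zero_of_natDegree_gt (n := 0) (by omega))
            fun x hx => by simpa [sub_eq_zero] using hx
      _ = q := hdeg

theorem card_pow_succ_eq (hF : Fintype.card F = q ^ 2) {γ : F} (hγ : γ ^ q = γ)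
    (hγ0 : γ ≠ 0) :
    #{u : F | u ^ (q + 1) = γ} = q + 1 := by
  have hq := two_le_of_card_eq_sq hF
  have hfib : #{u ∈ univ.erase 0 | u ^ (q + 1) = γ} = q + 1 := by
    refine card_fiber_eq_of_card_eq_mul (t := {x : F | x ^ q = x ∧ x ≠ 0}) (m := q - 1)
      (fun u hu => ?_) ?_ (fun b _ => ?_) ?_ (by simpa using ⟨hγ, hγ0⟩)
    · simpa [pow_succ_pow_eq_self hF] using ne_of_mem_erase hu
    · calc #{x : F | x ^ q = x ∧ x ≠ 0} ≤ (X ^ (q - 1) - C 1 : F[X]).natDegree :=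
            card_le_natDegree_of_forall_isRoot (X_pow_sub_C_ne_zero (by omega) 1)
              fun x hx => by
                simp only [mem_filter, mem_univ, true_and] at hx
                have : x ^ (q - 1) * x = 1 * x := by
                  rw [← pow_succ, Nat.sub_add_cancel (by omega), hx.1, one_mul]
                simpa [sub_eq_zero] using mul_right_cancel₀ hx.2 this
        _ = q - 1 := natDegree_X_pow_sub_C
    · calc #{u ∈ univ.erase 0 | u ^ (q + 1) = b} ≤ (X ^ (q + 1) - C b : F[X]).natDegree :=
            card_le_natDegree_of_forall_isRoot (X_pow_sub_C_ne_zero (by omega) b)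
              fun x hx => by simpa [sub_eq_zero] using (mem_filter.1 hx).2
        _ = q + 1 := natDegree_X_pow_sub_C
    · rw [card_erase_of_mem (mem_univ 0), card_univ, hF]
      simpa [mul_comm] using Nat.sq_sub_sq q 1
  refine (congrArg card ?_).trans hfib
  ext u
  simp only [mem_filter, mem_univ, mem_erase, and_true, true_and, iff_and_self]
  rintro hu rfl
  exact hγ0 (by simpa using hu.symm)

end Hermitian

section HermitianLines

def hermitianCurve (q : ℕ) (F : Type*) [Field F] [Fintype F] [DecidableEq F] :
    Finset (F × F) :=
  {p | p.1 ^ (q + 1) = p.2 ^ q + p.2}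

variable {F : Type*} [Field F] [Fintype F] [DecidableEq F] {q : ℕ}

@[simp]
theorem mem_hermitianCurve {p : F × F} :
    p ∈ hermitianCurve q F ↔ p.1 ^ (q + 1) = p.2 ^ q + p.2 := by
  simp [hermitianCurve]

theorem card_hermitianCurve_filter_onLine_inl (hadd : ∀ a b : F, (a + b) ^ q = a ^ q + b ^ q)
    (hF : Fintype.card F = q ^ 2) (c : F) :
    #{p ∈ hermitianCurve q F | OnLine (.inl c) p} = q := by
  refine (card_bij' (fun p _ => p.2) (fun y _ => (c, y)) (fun p hp => ?_) (fun y hy => ?_)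
    (fun p hp => ?_) (fun y _ => rfl)).trans
    (card_pow_add_self_eq hadd hF (pow_succ_pow_eq_self hF c))
  · simp only [mem_filter, mem_univ, true_and, mem_hermitianCurve, onLine_inl] at hp ⊢
    rw [← hp.2, hp.1]
  · simpa [eq_comm] using hy
  · simp only [mem_filter, mem_hermitianCurve, onLine_inl] at hp
    exact Prod.ext hp.2.symm rfl

theorem card_hermitianCurve_filter_onLine_inr (hadd : ∀ a b : F, (a + b) ^ q = a ^ q + b ^ q)
    (hF : Fintype.card F = q ^ 2) (ab : F × F) :
    #{p ∈ hermitianCurve q F | OnLine (.inr ab) p}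
      = if ab.1 ^ (q + 1) + ab.2 ^ q + ab.2 = 0 then 1 else q + 1 := by
  obtain ⟨a, b⟩ := ab
  set γ := a ^ (q + 1) + b ^ q + b with hγ
  -- on the line `y = a x + b` the curve equation reads `(x - a ^ q) ^ (q + 1) = γ`
  have key : ∀ x : F,
      x ^ (q + 1) = (a * x + b) ^ q + (a * x + b) ↔ (x - a ^ q) ^ (q + 1) = γ := by
    intro x
    have e : (x - a ^ q) ^ (q + 1) = (x ^ q - a) * (x - a ^ q) := by
      rw [pow_succ, sub_pow_of_add_pow hadd, pow_pow_eq_self_of_card_eq_sq hF]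
    rw [e, hadd, mul_pow, pow_succ, hγ, pow_succ a]
    constructor <;> intro h <;> linear_combination h
  have hcard : #{p ∈ hermitianCurve q F | OnLine (.inr (a, b)) p}
      = #{u : F | u ^ (q + 1) = γ} := by
    refine card_bij' (fun p _ => p.1 - a ^ q) (fun u _ => (u + a ^ q, a * (u + a ^ q) + b))
      (fun p hp => ?_) (fun u hu => ?_) (fun p hp => ?_) (fun u _ => by simp)
    · simp only [mem_filter, mem_univ, true_and, mem_hermitianCurve, onLine_inr] at hp ⊢
      rw [← key, ← hp.2, hp.1]
    · simp only [mem_filter, mem_univ, true_and, mem_hermitianCurve, onLine_inr] at hu ⊢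
      rw [key, add_sub_cancel_right, hu]
      simp
    · simp only [mem_filter, mem_hermitianCurve, onLine_inr] at hp
      exact Prod.ext (sub_add_cancel _ _) (by rw [sub_add_cancel, hp.2])
  rw [hcard]
  split_ifs with hγ0
  · rw [hγ0, card_eq_one]
    exact ⟨0, by ext u; simp [pow_eq_zero_iff (Nat.succ_ne_zero q)]⟩
  · refine card_pow_succ_eq hF ?_ hγ0
    rw [hγ, add_assoc, hadd, pow_succ_pow_eq_self hF, pow_add_self_pow_eq_self hadd hF]

theorem card_filter_pow_succ_add_pow_add_eq_zero
    (hadd : ∀ a b : F, (a + b) ^ q = a ^ q + b ^ q) (hF : Fintype.card F = q ^ 2) :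
    #{ab : F × F | ab.1 ^ (q + 1) + ab.2 ^ q + ab.2 = 0} = q ^ 3 := by
  have hfib : ∀ a : F, #{b : F | a ^ (q + 1) + b ^ q + b = 0} = q := fun a => by
    have hβ : (-a ^ (q + 1)) ^ q = -a ^ (q + 1) := by
      have := hadd (-a ^ (q + 1)) (a ^ (q + 1))
      rw [neg_add_cancel, zero_pow (by have := two_le_of_card_eq_sq hF; omega),
        pow_succ_pow_eq_self hF] at this
      linear_combination -this
    refine (congrArg card (filter_congr fun b _ => ?_)).trans (card_pow_add_self_eq hadd hF hβ)
    constructor <;> intro h <;> linear_combination h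
  rw [card_filter, Fintype.sum_prod_type]
  simp_rw [← card_filter, hfib, sum_const, card_univ, hF]
  ring

theorem card_biUnion_powersetCard_hermitianCurve_filter_onLine
    (hadd : ∀ a b : F, (a + b) ^ q = a ^ q + b ^ q) (hF : Fintype.card F = q ^ 2) {d : ℕ}
    (hd : 2 ≤ d) :
    #((univ : Finset (F ⊕ F × F)).biUnion
        fun L => {p ∈ hermitianCurve q F | OnLine L p}.powersetCard d)
      = q ^ 2 * q.choose d + (q ^ 4 - q ^ 3) * (q + 1).choose d := by
  rw [card_biUnion fun L₁ _ L₂ _ hne => disjoint_left.2 fun S hS₁ hS₂ => ?_]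
  · have hsecant :
        #{ab : F × F | ¬ab.1 ^ (q + 1) + ab.2 ^ q + ab.2 = 0} = q ^ 4 - q ^ 3 := by
      have := card_filter_add_card_filter_not (s := (univ : Finset (F × F)))
        fun ab : F × F => ab.1 ^ (q + 1) + ab.2 ^ q + ab.2 = 0
      rw [card_filter_pow_succ_add_pow_add_eq_zero hadd hF, card_univ, Fintype.card_prod, hF,
        ← pow_add] at this
      norm_num at this
      omega
    simp only [card_powersetCard, Fintype.sum_sum_type,
      card_hermitianCurve_filter_onLine_inl hadd hF,
      card_hermitianCurve_filter_onLine_inr hadd hF,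
      apply_ite (Nat.choose · d), Nat.choose_eq_zero_of_lt (by omega : 1 < d), sum_ite,
      sum_const_zero, sum_const, card_univ, hF, smul_eq_mul, zero_add, hsecant]
  · rw [mem_powersetCard] at hS₁ hS₂
    obtain ⟨p, hp, p', hp', hne'⟩ := one_lt_card.1 (by omega : 1 < #S)
    have honLine : ∀ {L}, S ⊆ {p ∈ hermitianCurve q F | OnLine L p} → ∀ x ∈ S, OnLine L x :=
      fun h x hx => (mem_filter.1 (h hx)).2
    exact hne (eq_of_onLine_of_ne hne' (honLine hS₁.1 p hp) (honLine hS₁.1 p' hp')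
      (honLine hS₂.1 p hp) (honLine hS₂.1 p' hp'))

end HermitianLines

section Codewords

variable {F : Type*} [Field F] [Fintype F] [DecidableEq F] {q n : ℕ}

def codewordSupport (z : F × F → F) : Finset (F × F) := {p | z p ≠ 0}

@[simp]
theorem mem_codewordSupport {z : F × F → F} {p : F × F} :
    p ∈ codewordSupport z ↔ z p ≠ 0 := by
  simp [codewordSupport]

theorem hermitianCodeword_zero_and_weight_iff (z : F × F → F) :
    hermitianCodeword q (n + 2) 0 z ∧ hermitianWeight z = n + 2 ↔
      codewordSupport z ⊆ hermitianCurve q F ∧ #(codewordSupport z) = n + 2 ∧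
        VanishingMoments (codewordSupport z) z n := by
  have hsum : codewordSupport z ⊆ hermitianCurve q F → ∀ r s : ℕ,
      ∑ p ∈ codewordSupport z, z p * p.1 ^ r * p.2 ^ s
        = ∑ p ∈ hermitianCurve q F, z p * p.1 ^ r * p.2 ^ s := fun h r s =>
    sum_subset h fun p _ hp => by simp_all
  have hsub : codewordSupport z ⊆ hermitianCurve q F ↔
      ∀ p : F × F, p.1 ^ (q + 1) ≠ p.2 ^ q + p.2 → z p = 0 := by
    simp only [subset_iff, mem_codewordSupport, mem_hermitianCurve]
    exact forall_congr' fun p => not_imp_comm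
  simp only [hermitianCodeword, hermitianWeight, VanishingMoments, ← hsub, Nat.add_sub_cancel,
    Nat.not_lt_zero, false_and, exists_false, or_false]
  constructor
  · rintro ⟨⟨hsupp, hmom⟩, hw⟩
    exact ⟨hsupp, hw, fun r s hrs => (hsum hsupp r s).trans (hmom r s hrs)⟩
  · rintro ⟨hsupp, hw, hmom⟩
    exact ⟨⟨hsupp, fun r s hrs => (hsum hsupp r s).symm.trans (hmom r s hrs)⟩, hw⟩

open scoped Classical in
theorem card_hermitianCodeword_zero_weight_eq :
    #{z : F × F → F | hermitianCodeword q (n + 2) 0 z ∧ hermitianWeight z = n + 2}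
      = #((univ : Finset (F ⊕ F × F)).biUnion
          fun L => {p ∈ hermitianCurve q F | OnLine L p}.powersetCard (n + 2))
        * (Fintype.card F - 1) := by
  set C := (univ : Finset (F ⊕ F × F)).biUnion
    fun L => {p ∈ hermitianCurve q F | OnLine L p}.powersetCard (n + 2)
  have hmaps : Set.MapsTo codewordSupport
      ({z | hermitianCodeword q (n + 2) 0 z ∧ hermitianWeight z = n + 2} : Finset (F × F → F))
      (C : Set (Finset (F × F))) := fun z hz => by
    simp only [coe_filter, mem_univ, true_and, hermitianCodeword_zero_and_weight_iff,
      Set.mem_ofPred_eq] at hz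
    obtain ⟨hsub, hw, hmom⟩ := hz
    obtain ⟨L, hL⟩ := exists_onLine_of_vanishingMoments hw (fun _ => mem_codewordSupport.1) hmom
    exact mem_biUnion.2 ⟨L, mem_univ _,
      mem_powersetCard.2 ⟨fun p hp => mem_filter.2 ⟨hsub hp, hL p hp⟩, hw⟩⟩
  rw [card_eq_sum_card_fiberwise hmaps, sum_const_nat fun S hS => ?_]
  obtain ⟨L, -, hS⟩ := mem_biUnion.1 hS
  obtain ⟨hSL, hcard⟩ := mem_powersetCard.1 hS
  rw [← card_filter_support_eq_and_vanishingMoments (fun p hp => (mem_filter.1 (hSL hp)).2) hcard]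
  congr 1
  ext z
  simp only [mem_filter, mem_univ, true_and, hermitianCodeword_zero_and_weight_iff]
  constructor
  · rintro ⟨⟨-, -, hmom⟩, rfl⟩
    exact ⟨fun p => mem_codewordSupport.symm, hmom⟩
  · rintro ⟨hsupp, hmom⟩
    obtain rfl : codewordSupport z = S := ext fun p => by simp [hsupp]
    exact ⟨⟨hSL.trans (filter_subset _ _), hcard, hmom⟩, rfl⟩

end Codewords

theorem mul_sq_mul_choose_add_mul_choose_succ {q d : ℕ} (hd : 1 ≤ d) (hdq : d ≤ q) :
    d * (q ^ 2 * q.choose d + (q ^ 4 - q ^ 3) * (q + 1).choose d)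
      = q ^ 2 * q.choose (d - 1) * (q ^ 3 - d + 1) := by
  have hB : q.choose d * d = q.choose (d - 1) * (q - (d - 1)) := by
    simpa [Nat.sub_add_cancel hd] using Nat.choose_succ_right_eq q (d - 1)
  have hE : (q + 1) * q.choose (d - 1) = (q + 1).choose d * d := by
    simpa [Nat.sub_add_cancel hd] using Nat.add_one_mul_choose_eq q (d - 1)
  have hq3 : d ≤ q ^ 3 := hdq.trans (Nat.le_self_pow three_ne_zero q)
  have h34 : q ^ 3 ≤ q ^ 4 := Nat.pow_le_pow_right (by omega) (by omega)
  zify [hd, hdq.trans' (Nat.sub_le d 1), h34, hq3] at hB hE ⊢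
  linear_combination (q : ℤ) ^ 2 * hB - ((q : ℤ) ^ 4 - (q : ℤ) ^ 3) * hE

theorem stmt_14 (q d : ℕ) (hq : IsPrimePow q) (hd : 2 ≤ d) (hdq : d ≤ q)
    (F : Type*) [Field F] [Fintype F] [DecidableEq F] (hF : Fintype.card F = q ^ 2) :
    d * Nat.card {z : F × F → F // hermitianCodeword q d 0 z ∧ hermitianWeight z = d}
      = q ^ 2 * (q ^ 2 - 1) * Nat.choose q (d - 1) * (q ^ 3 - d + 1) := by
  classical
  obtain ⟨n, rfl⟩ : ∃ n, d = n + 2 := ⟨d - 2, by omega⟩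
  rw [Nat.card_eq_fintype_card, Fintype.card_subtype, card_hermitianCodeword_zero_weight_eq,
    card_biUnion_powersetCard_hermitianCurve_filter_onLine (add_pow_of_isPrimePow hq hF) hF
      (by omega), hF, ← mul_assoc, mul_sq_mul_choose_add_mul_choose_succ (by omega) hdq]
  ring
end

section
/- Let q be a power of a prime, let F be the finite field with q² elements, and let 2 ≤ d ≤ q and 1 ≤ j ≤ d−1. If z is a codeword of weight exactly d of the edge code H^j_d, then all points of its support have the same x-coordinate, i.e. there is t ∈ F such that every (x,y) with z(x,y) ≠ 0 satisfies x = t (the support lies on a vertical line). Moreover, if d ≥ 4 and z is a codeword of weight exactly d+1 of H^j_d, then either all points of the support of z have pairwise distinct x-coordinates, or they all have the same x-coordinate. -/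
section Aux

variable {F : Type*} [Field F] [Fintype F] [DecidableEq F]

private lemma hc_expand (d : ℕ) (z : F × F → F)
    (horth : ∀ r s : ℕ, (r + s ≤ d - 2 ∨ (r = d - 1 ∧ s = 0)) →
      ∑ p : F × F, z p * (p.1 ^ r * p.2 ^ s) = 0)
    (g h : Polynomial F)
    (hrs : ∀ r s : ℕ, r ≤ g.natDegree → s ≤ h.natDegree →
      (r + s ≤ d - 2 ∨ (r = d - 1 ∧ s = 0))) :
    ∑ q : F × F, z q * (g.eval q.1 * h.eval q.2) = 0 := by
  have step : ∀ q : F × F, z q * (g.eval q.1 * h.eval q.2)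
      = ∑ r ∈ Finset.range (g.natDegree + 1), ∑ s ∈ Finset.range (h.natDegree + 1),
          (g.coeff r * h.coeff s) * (z q * (q.1 ^ r * q.2 ^ s)) := by
    intro qq
    rw [Polynomial.eval_eq_sum_range, Polynomial.eval_eq_sum_range, Finset.sum_mul_sum,
      Finset.mul_sum]
    refine Finset.sum_congr rfl fun r _ => ?_
    rw [Finset.mul_sum]
    exact Finset.sum_congr rfl fun s _ => by ring
  simp only [step]
  rw [Finset.sum_comm]
  refine Finset.sum_eq_zero fun r hr => ?_
  rw [Finset.sum_comm]
  refine Finset.sum_eq_zero fun s hs => ?_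
  rw [← Finset.mul_sum,
    horth r s (hrs r s (Nat.lt_succ_iff.mp (Finset.mem_range.mp hr))
      (Nat.lt_succ_iff.mp (Finset.mem_range.mp hs))), mul_zero]

private lemma hc_vanish (d : ℕ) (z : F × F → F)
    (horth : ∀ r s : ℕ, (r + s ≤ d - 2 ∨ (r = d - 1 ∧ s = 0)) →
      ∑ p : F × F, z p * (p.1 ^ r * p.2 ^ s) = 0)
    (p : F × F) (hp : z p ≠ 0) (X' Y' : Finset F)
    (hx : p.1 ∉ X') (hy : p.2 ∉ Y')
    (hcov : ∀ q : F × F, z q ≠ 0 → q ≠ p → q.1 ∈ X' ∨ q.2 ∈ Y')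
    (hdeg : X'.card + Y'.card ≤ d - 2 ∨ (Y' = ∅ ∧ X'.card ≤ d - 1)) : False := by
  set g : Polynomial F := ∏ v ∈ X', (Polynomial.X - Polynomial.C v) with hg
  set h : Polynomial F := ∏ w ∈ Y', (Polynomial.X - Polynomial.C w) with hh
  have hgdeg : g.natDegree = X'.card := by
    rw [hg, Polynomial.natDegree_prod_of_monic _ _ fun v _ => Polynomial.monic_X_sub_C v]
    simp [Polynomial.natDegree_X_sub_C]
  have hhdeg : h.natDegree = Y'.card := by
    rw [hh, Polynomial.natDegree_prod_of_monic _ _ fun v _ => Polynomial.monic_X_sub_C v]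
    simp [Polynomial.natDegree_X_sub_C]
  have hgeval : ∀ a : F, g.eval a = ∏ v ∈ X', (a - v) := by
    intro a
    rw [hg, Polynomial.eval_prod]
    exact Finset.prod_congr rfl fun v _ => by simp
  have hheval : ∀ a : F, h.eval a = ∏ w ∈ Y', (a - w) := by
    intro a
    rw [hh, Polynomial.eval_prod]
    exact Finset.prod_congr rfl fun v _ => by simp
  have hzero : ∑ qq : F × F, z qq * (g.eval qq.1 * h.eval qq.2) = 0 := by
    apply hc_expand d z horth
    intro r s hr hs
    rw [hgdeg] at hr
    rw [hhdeg] at hs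
    rcases hdeg with h1 | ⟨h1, h2⟩
    · left; omega
    · rw [h1, Finset.card_empty] at hs
      omega
  have hne : ∑ qq : F × F, z qq * (g.eval qq.1 * h.eval qq.2) ≠ 0 := by
    rw [Fintype.sum_eq_single p]
    · refine mul_ne_zero hp (mul_ne_zero ?_ ?_)
      · rw [hgeval]
        exact Finset.prod_ne_zero_iff.mpr fun v hv =>
          sub_ne_zero_of_ne fun e => hx (e ▸ hv)
      · rw [hheval]
        exact Finset.prod_ne_zero_iff.mpr fun v hv =>
          sub_ne_zero_of_ne fun e => hy (e ▸ hv)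
    · intro qq hq
      by_cases hzq : z qq = 0
      · rw [hzq, zero_mul]
      · rcases hcov qq hzq hq with hc | hc
        · rw [hgeval, Finset.prod_eq_zero hc (sub_self _), zero_mul, mul_zero]
        · rw [hheval qq.2, Finset.prod_eq_zero hc (sub_self _), mul_zero, mul_zero]
  exact hne hzero

end Aux

theorem stmt_15 (q d j : ℕ) (hq : IsPrimePow q) (hd : 2 ≤ d) (hdq : d ≤ q)
    (hj1 : 1 ≤ j) (hj2 : j ≤ d - 1)
    (F : Type*) [Field F] [Fintype F] [DecidableEq F] (hF : Fintype.card F = q ^ 2)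
    (z : F × F → F) (hz : hermitianCodeword q d j z) :
    (hermitianWeight z = d → ∃ t : F, ∀ p : F × F, z p ≠ 0 → p.1 = t) ∧
    (4 ≤ d → hermitianWeight z = d + 1 →
      (∀ p p' : F × F, z p ≠ 0 → z p' ≠ 0 → p ≠ p' → p.1 ≠ p'.1) ∨
      (∃ t : F, ∀ p : F × F, z p ≠ 0 → p.1 = t)) := by
  classical
  obtain ⟨hz0, hzo⟩ := hz
  set S : Finset (F × F) := Finset.univ.filter (fun p : F × F => z p ≠ 0) with hSdef
  have hmemS : ∀ p : F × F, p ∈ S ↔ z p ≠ 0 := by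
    intro p; simp [hSdef]
  have horth : ∀ r s : ℕ, (r + s ≤ d - 2 ∨ (r = d - 1 ∧ s = 0)) →
      ∑ p : F × F, z p * (p.1 ^ r * p.2 ^ s) = 0 := by
    intro r s hrs
    have h1 := hzo r s (by
      rcases hrs with h | ⟨h1, h2⟩
      · exact Or.inl h
      · exact Or.inr ⟨0, hj1, by omega, h2⟩)
    calc ∑ p : F × F, z p * (p.1 ^ r * p.2 ^ s)
        = ∑ p ∈ Finset.univ.filter
            (fun p : F × F => p.1 ^ (q + 1) = p.2 ^ q + p.2), z p * p.1 ^ r * p.2 ^ s := by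
          rw [Finset.sum_filter]
          refine Finset.sum_congr rfl fun p _ => ?_
          by_cases hc : p.1 ^ (q + 1) = p.2 ^ q + p.2
          · simp [hc, mul_assoc]
          · simp [hc, hz0 p hc]
      _ = 0 := h1
  -- key finisher
  have key : ∀ p : F × F, z p ≠ 0 →
      (((S.image Prod.fst).card - 1) + ((S.filter fun r => r.1 = p.1).card - 1) ≤ d - 2 ∨
       ((S.filter fun r => r.1 = p.1).card = 1 ∧ (S.image Prod.fst).card - 1 ≤ d - 1)) →
      False := by
    intro p hp hcase
    set C := S.filter (fun r => r.1 = p.1) with hC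
    have hpS : p ∈ S := (hmemS p).mpr hp
    have hpC : p ∈ C := Finset.mem_filter.mpr ⟨hpS, rfl⟩
    set X' := (S.image Prod.fst).erase p.1 with hX
    set Y' := (C.erase p).image Prod.snd with hY
    have hXcard : X'.card = (S.image Prod.fst).card - 1 :=
      Finset.card_erase_of_mem (Finset.mem_image_of_mem _ hpS)
    have hYcard : Y'.card ≤ C.card - 1 :=
      le_trans Finset.card_image_le (le_of_eq (Finset.card_erase_of_mem hpC))
    refine hc_vanish d z horth p hp X' Y' (Finset.notMem_erase _ _) ?_ ?_ ?_
    · intro hmem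
      obtain ⟨qq, hqq, hq2⟩ := Finset.mem_image.mp hmem
      have hqC := Finset.mem_of_mem_erase hqq
      have hqp := Finset.ne_of_mem_erase hqq
      exact hqp (Prod.ext (Finset.mem_filter.mp hqC).2 hq2)
    · intro qq hzq hqp
      have hqS : qq ∈ S := (hmemS qq).mpr hzq
      by_cases hc : qq.1 = p.1
      · exact Or.inr (Finset.mem_image_of_mem _
          (Finset.mem_erase.mpr ⟨hqp, Finset.mem_filter.mpr ⟨hqS, hc⟩⟩))
      · exact Or.inl (Finset.mem_erase.mpr ⟨hc, Finset.mem_image_of_mem _ hqS⟩)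
    · rcases hcase with h1 | ⟨h1, h2⟩
      · left; omega
      · right
        constructor
        · obtain ⟨a, ha⟩ := Finset.card_eq_one.mp h1
          have hpa : p = a := by
            have := hpC
            rw [ha, Finset.mem_singleton] at this
            exact this
          rw [hY, ha, hpa, Finset.erase_singleton, Finset.image_empty]
        · omega
  -- counting setup, shared by both parts
  have count : ∀ (w : ℕ), S.card = w → 2 ≤ w →
      (¬ ∃ t : F, ∀ p : F × F, z p ≠ 0 → p.1 = t) →
      ∃ k m : ℕ, 2 ≤ k ∧ 1 ≤ m ∧ k ≤ (S.image Prod.fst).card ∧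
        (2 ≤ m → k * m ≤ w) ∧
        ∃ p : F × F, z p ≠ 0 ∧ (S.image Prod.fst).card = k ∧
          (S.filter fun r => r.1 = p.1).card = m := by
    intro w hw hw2 hcon
    push_neg at hcon
    have hSne : S.Nonempty := by
      rw [← Finset.card_pos, hw]; omega
    obtain ⟨p, hpS, hmin⟩ := Finset.exists_min_image S
      (fun qq => (S.filter fun r => r.1 = qq.1).card) hSne
    have hp : z p ≠ 0 := (hmemS p).mp hpS
    refine ⟨(S.image Prod.fst).card, (S.filter fun r => r.1 = p.1).card, ?_, ?_, le_rfl, ?_,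
      p, hp, rfl, rfl⟩
    · obtain ⟨qq, hq, hq1⟩ := hcon p.1
      exact Finset.one_lt_card.mpr
        ⟨qq.1, Finset.mem_image_of_mem _ ((hmemS qq).mpr hq),
         p.1, Finset.mem_image_of_mem _ hpS, hq1⟩
    · exact Finset.card_pos.mpr ⟨p, Finset.mem_filter.mpr ⟨hpS, rfl⟩⟩
    · intro hm2
      have hsum : S.card = ∑ v ∈ S.image Prod.fst, (S.filter fun r => r.1 = v).card :=
        Finset.card_eq_sum_card_image Prod.fst S
      have hlow : ∀ v ∈ S.image Prod.fst,
          (S.filter fun r => r.1 = p.1).card ≤ (S.filter fun r => r.1 = v).card := by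
        intro v hv
        obtain ⟨qq, hqS, rfl⟩ := Finset.mem_image.mp hv
        exact hmin qq hqS
      calc (S.image Prod.fst).card * (S.filter fun r => r.1 = p.1).card
          = ∑ _v ∈ S.image Prod.fst, (S.filter fun r => r.1 = p.1).card := by
            rw [Finset.sum_const, smul_eq_mul]
        _ ≤ ∑ v ∈ S.image Prod.fst, (S.filter fun r => r.1 = v).card :=
            Finset.sum_le_sum hlow
        _ = w := by rw [← hsum, hw]
  constructor
  · -- weight d case
    intro hw
    have hS : S.card = d := hw
    by_contra hcon
    obtain ⟨k, m, hk2, hm1, hkle, hkm, p, hp, hkeq, hmeq⟩ := count d hS hd hcon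
    have hkd : k ≤ d := by
      rw [← hS]
      exact le_trans hkle (Finset.card_image_le : (S.image Prod.fst).card ≤ S.card)
    by_cases hm2 : 2 ≤ m
    · have h1 := hkm hm2
      have h2 : k + m ≤ k * m := Nat.add_le_mul hk2 hm2
      exact key p hp (Or.inl (by rw [hkeq, hmeq]; omega))
    · exact key p hp (Or.inr ⟨by rw [hmeq]; omega, by rw [hkeq]; omega⟩)
  · -- weight d+1 case
    intro hd4 hw
    have hS : S.card = d + 1 := hw
    by_cases hdis : ∀ p p' : F × F, z p ≠ 0 → z p' ≠ 0 → p ≠ p' → p.1 ≠ p'.1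
    · exact Or.inl hdis
    right
    push_neg at hdis
    obtain ⟨a, b, ha, hb, hab, hab1⟩ := hdis
    by_contra hcon
    obtain ⟨k, m, hk2, hm1, hkle, hkm, p, hp, hkeq, hmeq⟩ := count (d + 1) hS (by omega) hcon
    have haS : a ∈ S := (hmemS a).mpr ha
    have hbS : b ∈ S := (hmemS b).mpr hb
    -- k ≤ d since the image of S under fst equals the image of S.erase b
    have hkd : k ≤ d := by
      have hsub : S.image Prod.fst ⊆ (S.erase b).image Prod.fst := by
        intro v hv
        obtain ⟨qq, hqS, rfl⟩ := Finset.mem_image.mp hv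
        by_cases hqb : qq = b
        · exact Finset.mem_image.mpr ⟨a, Finset.mem_erase.mpr ⟨hab, haS⟩, by rw [hab1, hqb]⟩
        · exact Finset.mem_image_of_mem _ (Finset.mem_erase.mpr ⟨hqb, hqS⟩)
      have h2 : (S.image Prod.fst).card ≤ (S.erase b).card :=
        le_trans (Finset.card_le_card hsub) Finset.card_image_le
      rw [Finset.card_erase_of_mem hbS, hS] at h2
      omega
    by_cases hm2 : 2 ≤ m
    · have h1 := hkm hm2
      have hkmd : k + m ≤ d := by
        by_cases h3 : 3 ≤ k
        · have : k + m + 1 ≤ k * m := by nlinarith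
          omega
        · have hk2' : k = 2 := by omega
          have h2m : 2 * m ≤ d + 1 := by rw [← hk2']; exact h1
          omega
      exact key p hp (Or.inl (by rw [hkeq, hmeq]; omega))
    · exact key p hp (Or.inr ⟨by rw [hmeq]; omega, by rw [hkeq]; omega⟩)
end

section
/- Let q be a power of a prime, let F be the finite field with q² elements, and let 2 ≤ d ≤ q. If z is a codeword of weight exactly d of the corner code H^0_d, then the d points of the support of z are collinear, i.e. there is an affine line L in F×F (either a vertical line x = t or a line y = a·x + b) containing every point (x,y) with z(x,y) ≠ 0. -/
/-!
If the support `S` of a codeword of weight at most `d` contained three non-collinear points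
`u, v, w`, multiply the line through `u` and `v` by one affine form for each remaining point of
`S`, vanishing there but not at `w`. The product has degree at most `d - 2`, so it is orthogonal
to the codeword, yet it vanishes on `S` everywhere except at `w`.
-/

open MvPolynomial Finset

section AffinePlane

variable {F : Type*} [Field F]

noncomputable def lineThrough (u v : F × F) : MvPolynomial (Fin 2) F :=
  C (v.2 - u.2) * (X 0 - C u.1) - C (v.1 - u.1) * (X 1 - C u.2)

theorem eval_lineThrough (u v p : F × F) :
    eval ![p.1, p.2] (lineThrough u v) =
      (v.2 - u.2) * (p.1 - u.1) - (v.1 - u.1) * (p.2 - u.2) := by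
  simp [lineThrough]

theorem eval_lineThrough_left (u v : F × F) : eval ![u.1, u.2] (lineThrough u v) = 0 := by
  rw [eval_lineThrough]; ring

theorem eval_lineThrough_right (u v : F × F) : eval ![v.1, v.2] (lineThrough u v) = 0 := by
  rw [eval_lineThrough]; ring

theorem totalDegree_lineThrough_le (u v : F × F) : (lineThrough u v).totalDegree ≤ 1 := by
  have hX : ∀ (i : Fin 2) (a b : F),
      (C a * (X i - C b) : MvPolynomial (Fin 2) F).totalDegree ≤ 1 :=
    fun i a b => (totalDegree_mul _ _).trans <| by
      rw [totalDegree_C, zero_add]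
      exact (totalDegree_sub_C_le _ _).trans (totalDegree_X i).le
  exact (totalDegree_sub _ _).trans (max_le (hX 0 _ _) (hX 1 _ _))

variable [DecidableEq F]

noncomputable def separatingForm (w p : F × F) : MvPolynomial (Fin 2) F :=
  if p.1 ≠ w.1 then X 0 - C p.1 else X 1 - C p.2

theorem eval_separatingForm_self (w p : F × F) :
    eval ![p.1, p.2] (separatingForm w p) = 0 := by
  unfold separatingForm; split_ifs <;> simp

theorem eval_separatingForm_ne_zero {w p : F × F} (h : p ≠ w) :
    eval ![w.1, w.2] (separatingForm w p) ≠ 0 := by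
  unfold separatingForm
  split_ifs with h1
  · simpa [sub_eq_zero] using Ne.symm h1
  · rw [not_not] at h1
    simpa [sub_eq_zero] using fun h2 => h (Prod.ext h1 h2.symm)

theorem totalDegree_separatingForm_le (w p : F × F) : (separatingForm w p).totalDegree ≤ 1 := by
  unfold separatingForm
  split_ifs <;> exact (totalDegree_sub_C_le _ _).trans (totalDegree_X _).le

end AffinePlane

theorem exists_eq_or_exists_eq_mul_add_of_eval_lineThrough {F : Type*} [Field F] {u v : F × F}
    (huv : u ≠ v) {P : F × F → Prop}
    (h : ∀ p, P p → eval ![p.1, p.2] (lineThrough u v) = 0) :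
    (∃ t : F, ∀ p, P p → p.1 = t) ∨ (∃ a b : F, ∀ p, P p → p.2 = a * p.1 + b) := by
  simp only [eval_lineThrough, sub_eq_zero] at h
  by_cases hx : u.1 = v.1
  · have hy : v.2 - u.2 ≠ 0 := sub_ne_zero.mpr fun hy => huv (Prod.ext hx hy.symm)
    refine .inl ⟨v.1, fun p hp => ?_⟩
    have := h p hp
    rw [hx, sub_self, zero_mul, mul_eq_zero] at this
    exact sub_eq_zero.mp (this.resolve_left hy)
  · have hx' : v.1 - u.1 ≠ 0 := sub_ne_zero.mpr (Ne.symm hx)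
    refine .inr ⟨(v.2 - u.2) / (v.1 - u.1), u.2 - (v.2 - u.2) / (v.1 - u.1) * u.1,
      fun p hp => ?_⟩
    field_simp
    linear_combination -(h p hp)

section HermitianCode

variable {F : Type*} [Field F] [Fintype F] [DecidableEq F] {q d j : ℕ} {z : F × F → F}

theorem hermitianCodeword.sum_mul_eval_eq_zero (hz : hermitianCodeword q d j z)
    {f : MvPolynomial (Fin 2) F} (hf : f.totalDegree ≤ d - 2) :
    ∑ p ∈ univ.filter (fun p : F × F => p.1 ^ (q + 1) = p.2 ^ q + p.2),
      z p * eval ![p.1, p.2] f = 0 := by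
  simp only [eval_eq', Fin.prod_univ_two, Matrix.cons_val_zero, Matrix.cons_val_one, mul_sum]
  rw [sum_comm]
  refine sum_eq_zero fun m hm => ?_
  have hm : m 0 + m 1 ≤ d - 2 := by
    have := le_totalDegree hm
    rw [Finsupp.sum_fintype _ _ (fun _ => rfl), Fin.sum_univ_two] at this
    omega
  rw [← mul_zero (coeff m f), ← hz.2 (m 0) (m 1) (.inl hm), mul_sum]
  exact sum_congr rfl fun p _ => by ring

theorem hermitianCodeword.eval_eq_zero_of_forall_ne (hz : hermitianCodeword q d j z)
    {f : MvPolynomial (Fin 2) F} (hf : f.totalDegree ≤ d - 2) {w : F × F} (hw : z w ≠ 0)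
    (hf0 : ∀ p ≠ w, z p ≠ 0 → eval ![p.1, p.2] f = 0) : eval ![w.1, w.2] f = 0 := by
  have hwH : w ∈ univ.filter (fun p : F × F => p.1 ^ (q + 1) = p.2 ^ q + p.2) :=
    mem_filter.mpr ⟨mem_univ w, by_contra fun h => hw (hz.1 w h)⟩
  have := hz.sum_mul_eval_eq_zero hf
  rw [sum_eq_single_of_mem w hwH fun p _ hpw => ?_] at this
  · exact (mul_eq_zero.mp this).resolve_left hw
  · by_cases hp : z p = 0
    · rw [hp, zero_mul]
    · rw [hf0 p hpw hp, mul_zero]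

theorem hermitianCodeword.eval_lineThrough_eq_zero (hz : hermitianCodeword q d j z)
    (hwt : hermitianWeight z ≤ d) {u v w : F × F} (hu : z u ≠ 0) (hv : z v ≠ 0)
    (hw : z w ≠ 0) :
    eval ![w.1, w.2] (lineThrough u v) = 0 := by
  by_contra hwl
  have hwu : w ≠ u := by rintro rfl; exact hwl (eval_lineThrough_left w v)
  have hwv : w ≠ v := by rintro rfl; exact hwl (eval_lineThrough_right u w)
  have huv : u ≠ v := by rintro rfl; exact hwl (by simp [eval_lineThrough])
  set S := univ.filter fun p => z p ≠ 0
  set T := S \ {u, v, w}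
  set f := lineThrough u v * ∏ p ∈ T, separatingForm w p
  have hT : #T + 3 ≤ d := by
    have hsub : {u, v, w} ⊆ S := by simp [insert_subset_iff, S, hu, hv, hw]
    have h3 : #({u, v, w} : Finset (F × F)) = 3 :=
      card_eq_three.mpr ⟨u, v, w, huv, hwu.symm, hwv.symm, rfl⟩
    have := card_sdiff_add_card_eq_card hsub
    rw [h3] at this
    exact this ▸ hwt
  have hdeg : f.totalDegree ≤ d - 2 := calc
    _ ≤ 1 + ∑ p ∈ T, 1 :=
      (totalDegree_mul _ _).trans <| add_le_add (totalDegree_lineThrough_le u v) <|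
        (totalDegree_finsetProd _ _).trans <|
          sum_le_sum fun p _ => totalDegree_separatingForm_le w p
    _ ≤ d - 2 := by rw [sum_const, smul_eq_mul, mul_one]; omega
  have hvanish : ∀ p ≠ w, z p ≠ 0 → eval ![p.1, p.2] f = 0 := by
    intro p hpw hp
    rw [map_mul]
    by_cases hp' : p = u ∨ p = v
    · rcases hp' with rfl | rfl
      · rw [eval_lineThrough_left, zero_mul]
      · rw [eval_lineThrough_right, zero_mul]
    · have hpT : p ∈ T := by simp_all [T, S]
      rw [map_prod, prod_eq_zero hpT (eval_separatingForm_self w p), mul_zero]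
  have hfw := hz.eval_eq_zero_of_forall_ne hdeg hw hvanish
  rw [map_mul, map_prod] at hfw
  refine mul_ne_zero hwl (prod_ne_zero_iff.mpr fun p hp => eval_separatingForm_ne_zero ?_) hfw
  rintro rfl
  simp [T] at hp

theorem hermitianCodeword.support_collinear (hz : hermitianCodeword q d j z)
    (hwt : hermitianWeight z ≤ d) :
    (∃ t : F, ∀ p : F × F, z p ≠ 0 → p.1 = t) ∨
      (∃ a b : F, ∀ p : F × F, z p ≠ 0 → p.2 = a * p.1 + b) := by
  by_cases h : ∃ u v, z u ≠ 0 ∧ z v ≠ 0 ∧ u ≠ v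
  · obtain ⟨u, v, hu, hv, huv⟩ := h
    exact exists_eq_or_exists_eq_mul_add_of_eval_lineThrough huv
      fun w hw => hz.eval_lineThrough_eq_zero hwt hu hv hw
  · push Not at h
    by_cases h0 : ∃ u, z u ≠ 0
    · obtain ⟨u, hu⟩ := h0
      exact .inl ⟨u.1, fun p hp => by rw [h p u hp hu]⟩
    · exact .inl ⟨0, fun p hp => absurd ⟨p, hp⟩ h0⟩

end HermitianCode

theorem stmt_16_general (q d : ℕ)
    (F : Type*) [Field F] [Fintype F] [DecidableEq F]
    (z : F × F → F) (hz : hermitianCodeword q d 0 z) (hw : hermitianWeight z = d) :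
    (∃ t : F, ∀ p : F × F, z p ≠ 0 → p.1 = t) ∨
    (∃ a b : F, ∀ p : F × F, z p ≠ 0 → p.2 = a * p.1 + b) :=
  hz.support_collinear hw.le

theorem stmt_16 (q d : ℕ) (hq : IsPrimePow q) (hd : 2 ≤ d) (hdq : d ≤ q)
    (F : Type*) [Field F] [Fintype F] [DecidableEq F] (hF : Fintype.card F = q ^ 2)
    (z : F × F → F) (hz : hermitianCodeword q d 0 z) (hw : hermitianWeight z = d) :
    (∃ t : F, ∀ p : F × F, z p ≠ 0 → p.1 = t) ∨
    (∃ a b : F, ∀ p : F × F, z p ≠ 0 → p.2 = a * p.1 + b) :=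
  stmt_16_general q d F z hz hw
end

section
/- Let q be a power of a prime, let F be the finite field with q² elements, let 2 ≤ d ≤ q and 0 ≤ j ≤ d−1. Then the number of codewords z of weight exactly d+1 of the Hermitian code H^j_d (corner code if j = 0, edge code if 1 ≤ j ≤ d−1) such that all points of the support of z have the same x-coordinate equals q²·(q⁴ − (d+1)·q² + d)·C(q, d+1), where C(q,d+1) is the binomial coefficient. -/
open Finset Matrix Polynomial

theorem card_filter_forall_mem_eq_zero {ι R : Type*} [Fintype ι] [DecidableEq ι] [Zero R]
    [Fintype R] [DecidableEq R] (T : Finset ι) :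
    #{u : ι → R | ∀ i ∈ T, u i = 0} = Fintype.card R ^ (Fintype.card ι - #T) := by
  have : ({u : ι → R | ∀ i ∈ T, u i = 0} : Finset _) =
      Fintype.piFinset fun i => if i ∈ T then {0} else univ := by
    ext u
    simp only [mem_filter, mem_univ, true_and, Fintype.mem_piFinset]
    refine forall_congr' fun i => ?_
    split_ifs <;> simp [*]
  rw [this, Fintype.card_piFinset, ← card_compl, ← prod_const, ← univ_inter Tᶜ, ← prod_ite_mem]
  refine prod_congr rfl fun i _ => ?_
  split_ifs <;> simp_all

theorem card_biUnion_of_inter_subset_singleton {ι α : Type*} [DecidableEq α] {s : Finset ι}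
    {U : ι → Finset α} {a : α} (hs : s.Nonempty) (ha : ∀ i ∈ s, a ∈ U i)
    (hU : ∀ i ∈ s, ∀ j ∈ s, i ≠ j → U i ∩ U j ⊆ {a}) :
    #(s.biUnion U) = ∑ i ∈ s, #((U i).erase a) + 1 := by
  obtain ⟨i, hi⟩ := hs
  rw [← card_erase_add_one (mem_biUnion.2 ⟨i, hi, ha i hi⟩), erase_biUnion, card_biUnion]
  intro i hi j hj hij
  refine disjoint_left.2 fun x hxi hxj => (mem_erase.1 hxi).1 ?_
  exact mem_singleton.1
    (hU i hi j hj hij (mem_inter.2 ⟨mem_of_mem_erase hxi, mem_of_mem_erase hxj⟩))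

section Moments

variable {K : Type*} [Field K] [Fintype K] [DecidableEq K]

theorem card_filter_mulVec_eq_zero {ι : Type*} [Fintype ι] [DecidableEq ι] {M : Matrix ι ι K}
    (hM : M.det ≠ 0) (T : Finset ι) :
    #{w : ι → K | ∀ i ∈ T, (M *ᵥ w) i = 0} = Fintype.card K ^ (Fintype.card ι - #T) := by
  have hunit : IsUnit M := (isUnit_iff_isUnit_det M).2 (isUnit_iff_ne_zero.2 hM)
  rw [← card_filter_forall_mem_eq_zero T]
  exact card_equiv (.ofBijective _ ⟨mulVec_injective_iff_isUnit.2 hunit,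
    mulVec_surjective_iff_isUnit.2 hunit⟩) fun _ => by
      simp only [mem_filter, mem_univ, true_and]; rfl

theorem card_filter_sum_mul_pow_eq_zero {ι : Type*} [Fintype ι] [DecidableEq ι] {v : ι → K}
    (hv : Function.Injective v) {k : ℕ} (hk : k ≤ Fintype.card ι) :
    #{w : ι → K | ∀ s < k, ∑ i, w i * v i ^ s = 0} = Fintype.card K ^ (Fintype.card ι - k) := by
  set e := Fintype.equivFin ι
  -- row `a` of `M` is `(v i ^ (e a : ℕ))_i`, so the moments of `w` are the entries of `M *ᵥ w`
  set M := (vandermonde (v ∘ e.symm))ᵀ.submatrix e e with hM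
  have hdet : M.det ≠ 0 := by
    rw [det_submatrix_equiv_self, det_transpose, det_vandermonde_ne_zero_iff]
    exact hv.comp e.symm.injective
  have hT : #{a : ι | (e a : ℕ) < k} = k := by
    rw [card_equiv e (t := {s : Fin _ | s < k}) fun a => by simp, Fin.card_filter_val_lt,
      min_eq_right hk]
  conv_rhs => rw [← hT, ← card_filter_mulVec_eq_zero hdet]
  congr 1
  ext w
  simp only [hM, mem_filter, mem_univ, true_and, mulVec, dotProduct, submatrix_apply,
    transpose_apply, vandermonde_apply, Function.comp_apply, Equiv.symm_apply_apply]
  constructor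
  · intro h a ha
    simpa only [mul_comm] using h _ ha
  · intro h s hs
    simpa only [mul_comm, Equiv.apply_symm_apply] using
      h (e.symm ⟨s, hs.trans_le hk⟩) (by simpa using hs)

def vanishingMoments (S : Finset K) (k : ℕ) : Finset (K → K) :=
  {c | (∀ y ∉ S, c y = 0) ∧ ∀ s < k, ∑ y, c y * y ^ s = 0}

@[simp]
theorem mem_vanishingMoments {S : Finset K} {k : ℕ} {c : K → K} :
    c ∈ vanishingMoments S k ↔ (∀ y ∉ S, c y = 0) ∧ ∀ s < k, ∑ y, c y * y ^ s = 0 := by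
  simp [vanishingMoments]

theorem card_vanishingMoments {S : Finset K} {k : ℕ} (hk : k ≤ #S) :
    #(vanishingMoments S k) = Fintype.card K ^ (#S - k) := by
  rw [← Fintype.card_coe S] at hk ⊢
  rw [← card_filter_sum_mul_pow_eq_zero Subtype.val_injective hk]
  have hsum : ∀ c : K → K, (∀ y ∉ S, c y = 0) → ∀ s : ℕ,
      ∑ y, c y * y ^ s = ∑ y : S, c y * (y : K) ^ s := fun c hc s => by
    rw [sum_coe_sort S fun y => c y * y ^ s]
    exact (sum_subset (subset_univ S) fun y _ hy => by simp [hc y hy]).symm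
  refine card_nbij' (fun c y => c y) (fun w y => if h : y ∈ S then w ⟨y, h⟩ else 0)
    ?_ ?_ ?_ ?_
  · intro c hc
    simp only [mem_coe, mem_vanishingMoments, mem_filter, mem_univ, true_and] at hc ⊢
    intro s hs
    rw [← hsum c hc.1, hc.2 s hs]
  · intro w hw
    simp only [mem_coe, mem_vanishingMoments, mem_filter, mem_univ, true_and] at hw ⊢
    refine ⟨fun y hy => dif_neg hy, fun s hs => ?_⟩
    rw [hsum _ (fun y hy => dif_neg hy)]
    simpa using hw s hs
  · intro c hc
    rw [mem_coe, mem_vanishingMoments] at hc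
    funext y
    by_cases hy : y ∈ S
    · simp [hy]
    · simp [hy, hc.1 y hy]
  · intro w _
    simp

theorem mem_vanishingMoments_erase {S : Finset K} {k : ℕ} {c : K → K} {y : K} :
    c ∈ vanishingMoments (S.erase y) k ↔ c ∈ vanishingMoments S k ∧ c y = 0 := by
  simp only [mem_vanishingMoments, mem_erase, not_and_or, ne_eq, not_not]
  constructor
  · rintro ⟨hc, hs⟩
    exact ⟨⟨fun x hx => hc x (.inr hx), hs⟩, hc y (.inl rfl)⟩
  · rintro ⟨⟨hc, hs⟩, hy⟩
    exact ⟨fun x => Or.rec (fun h => h ▸ hy) (hc x), hs⟩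

theorem eq_zero_of_mem_vanishingMoments {S : Finset K} {k : ℕ} (hS : #S = k) {c : K → K}
    (hc : c ∈ vanishingMoments S k) : c = 0 := by
  have h0 : (0 : K → K) ∈ vanishingMoments S k := by simp
  exact card_le_one.1 (by rw [card_vanishingMoments hS.ge, hS, Nat.sub_self, pow_zero]) c hc 0 h0

theorem card_filter_support_eq_of_card_eq_add_two {S : Finset K} {k : ℕ} (hS : #S = k + 2) :
    #{c : K → K | (∀ y, c y ≠ 0 ↔ y ∈ S) ∧ ∀ s < k, ∑ y, c y * y ^ s = 0} =
      Fintype.card K ^ 2 - (k + 2) * Fintype.card K + (k + 1) := by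
  have hSQ : k + 2 ≤ Fintype.card K := hS ▸ card_le_univ S
  -- the functions in the plane `vanishingMoments S k` vanishing at some `y ∈ S` form `#S` lines
  have hset : ({c : K → K | (∀ y, c y ≠ 0 ↔ y ∈ S) ∧ ∀ s < k, ∑ y, c y * y ^ s = 0} :
      Finset _) = vanishingMoments S k \ S.biUnion fun y => vanishingMoments (S.erase y) k := by
    ext c
    simp only [mem_filter, mem_univ, true_and, mem_sdiff, mem_biUnion, mem_vanishingMoments]
    grind
  have hcard_erase : ∀ y ∈ S,
      #((vanishingMoments (S.erase y) k).erase 0) = Fintype.card K - 1 := by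
    intro y hy
    have : #(S.erase y) = k + 1 := by rw [card_erase_of_mem hy, hS]; rfl
    rw [card_erase_of_mem (by simp), card_vanishingMoments (by omega), this,
      Nat.add_sub_cancel_left, pow_one]
  have hinter : ∀ y ∈ S, ∀ y' ∈ S, y ≠ y' →
      vanishingMoments (S.erase y) k ∩ vanishingMoments (S.erase y') k ⊆ {0} := by
    intro y hy y' hy' hne c hc
    rw [mem_inter] at hc
    refine mem_singleton.2
      (eq_zero_of_mem_vanishingMoments (S := (S.erase y).erase y') (k := k) ?_ ?_)
    · rw [card_erase_of_mem (mem_erase.2 ⟨hne.symm, hy'⟩), card_erase_of_mem hy, hS]; rfl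
    · exact mem_vanishingMoments_erase.2 ⟨hc.1, (mem_vanishingMoments_erase.1 hc.2).2⟩
  rw [hset,
    card_sdiff_of_subset (biUnion_subset.2 fun y _ c hc => (mem_vanishingMoments_erase.1 hc).1),
    card_vanishingMoments (by omega), hS, Nat.add_sub_cancel_left,
    card_biUnion_of_inter_subset_singleton (card_pos.1 (by omega)) (fun y _ => by simp) hinter,
    sum_congr rfl hcard_erase, sum_const, hS, smul_eq_mul, Nat.mul_sub_one]
  have : (k + 2) * Fintype.card K ≤ Fintype.card K ^ 2 := by
    rw [sq]; exact Nat.mul_le_mul_right _ hSQ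
  have : k + 2 ≤ (k + 2) * Fintype.card K := Nat.le_mul_of_pos_right _ (by omega)
  omega

theorem card_filter_support_subset_of_card_eq_add_two (Y : Finset K) (k : ℕ) :
    #{c : K → K | (∀ y, c y ≠ 0 → y ∈ Y) ∧ #{y | c y ≠ 0} = k + 2 ∧
        ∀ s < k, ∑ y, c y * y ^ s = 0} =
      (#Y).choose (k + 2) * (Fintype.card K ^ 2 - (k + 2) * Fintype.card K + (k + 1)) := by
  rw [card_eq_sum_card_fiberwise (f := fun c : K → K => ({y | c y ≠ 0} : Finset K))
    (t := powersetCard (k + 2) Y) fun c hc => ?_]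
  · rw [← card_powersetCard, ← smul_eq_mul, ← sum_const]
    refine sum_congr rfl fun S hS => ?_
    obtain ⟨hSY, hS⟩ := mem_powersetCard.1 hS
    rw [← card_filter_support_eq_of_card_eq_add_two hS, filter_filter]
    congr 1
    refine filter_congr fun c _ => ?_
    simp only [Finset.ext_iff, mem_filter, mem_univ, true_and]
    constructor
    · rintro ⟨⟨-, -, hmoments⟩, hsupp⟩
      exact ⟨hsupp, hmoments⟩
    · rintro ⟨hsupp, hmoments⟩
      refine ⟨⟨fun y hy => hSY ((hsupp y).1 hy), ?_, hmoments⟩, hsupp⟩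
      rw [← hS]
      congr 1
      ext y
      simp [hsupp]
  · rw [mem_coe, mem_filter] at hc
    rw [mem_coe, mem_powersetCard]
    exact ⟨fun y hy => hc.2.1 y (mem_filter.1 hy).2, hc.2.2.1⟩

end Moments

section TraceFibre

variable {F : Type*} [Field F] [Fintype F] [DecidableEq F]

theorem card_filter_pow_add_mul_eq_le {q : ℕ} (hq : 2 ≤ q) (b c : F) :
    #{y : F | y ^ q + b * y = c} ≤ q := by
  have hdeg : (C b * X + C (-c)).degree < (q : WithBot ℕ) :=
    (degree_linear_le).trans_lt (by exact_mod_cast hq)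
  have hmonic : (X ^ q + (C b * X + C (-c))).Monic := monic_X_pow_add hdeg
  calc #{y : F | y ^ q + b * y = c}
      ≤ (X ^ q + (C b * X + C (-c))).natDegree := by
        refine card_le_degree_of_subset_roots fun y hy => ?_
        rw [mem_roots hmonic.ne_zero]
        simp only [mem_val, mem_filter, mem_univ, true_and] at hy
        simp [← add_assoc, hy]
    _ = q := by
        rw [natDegree_add_eq_left_of_degree_lt (by rwa [degree_X_pow]), natDegree_X_pow]

theorem card_filter_pow_add_self_eq {q : ℕ} (hq : IsPrimePow q) (hF : Fintype.card F = q ^ 2)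
    {a : F} (ha : a ^ q = a) : #{y : F | y ^ q + y = a} = q := by
  obtain ⟨p, k, hp, hk, rfl⟩ := hq
  have : Fact p.Prime := ⟨hp.nat_prime⟩
  have : CharP F p := charP_of_card_eq_prime_pow (f := k * 2) (by rw [hF, pow_mul])
  have hq : 2 ≤ p ^ k := (Nat.le_self_pow hk.ne' p).trans' hp.nat_prime.two_le
  set Fix : Finset F := {a : F | a ^ p ^ k = a}
  have hFix : #Fix ≤ p ^ k := by
    convert card_filter_pow_add_mul_eq_le hq (-1 : F) 0 using 3 with y
    rw [neg_one_mul, ← sub_eq_add_neg, sub_eq_zero]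
  have htrace : ∀ y : F, y ^ p ^ k + y ∈ Fix := fun y => by
    rw [mem_filter, add_pow_char_pow, ← pow_mul, ← sq, ← hF, FiniteField.pow_card, add_comm]
    exact ⟨mem_univ _, rfl⟩
  have hle : ∀ b ∈ Fix, #{y : F | y ^ p ^ k + y = b} ≤ p ^ k := fun b _ => by
    simpa using card_filter_pow_add_mul_eq_le hq (1 : F) b
  -- `|F| = q²` forces equality in `|F| = ∑ b ∈ Fix, #(fibre over b) ≤ #Fix * q ≤ q * q`
  have hsum : ∑ b ∈ Fix, #{y : F | y ^ p ^ k + y = b} = ∑ b ∈ Fix, p ^ k := by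
    refine le_antisymm (sum_le_sum hle) ?_
    calc ∑ b ∈ Fix, p ^ k = #Fix * p ^ k := by rw [sum_const, smul_eq_mul]
      _ ≤ p ^ k * p ^ k := Nat.mul_le_mul_right _ hFix
      _ = Fintype.card F := by rw [hF, sq]
      _ = ∑ b ∈ Fix, #{y : F | y ^ p ^ k + y = b} :=
        card_eq_sum_card_fiberwise fun y _ => htrace y
  exact (sum_eq_sum_iff_of_le hle).1 hsum a (mem_filter.2 ⟨mem_univ _, ha⟩)

theorem card_filter_hermitian_fiber {q : ℕ} (hq : IsPrimePow q) (hF : Fintype.card F = q ^ 2)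
    (t : F) : #{y : F | t ^ (q + 1) = y ^ q + y} = q := by
  simp_rw [eq_comm (a := t ^ (q + 1))]
  refine card_filter_pow_add_self_eq hq hF ?_
  rw [← pow_mul, show (q + 1) * q = q ^ 2 + q by ring, pow_add, ← hF, FiniteField.pow_card,
    pow_succ, mul_comm]

end TraceFibre

section VerticalLine

variable {α β M : Type*} [DecidableEq α] [Zero M]

def onVerticalLine (t : α) (c : β → M) : α × β → M :=
  fun p => if p.1 = t then c p.2 else 0

theorem onVerticalLine_injective (t : α) :
    Function.Injective (onVerticalLine t : (β → M) → α × β → M) :=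
  fun c c' h => funext fun y => by simpa [onVerticalLine] using congrFun h (t, y)

theorem fst_eq_of_onVerticalLine_ne_zero {t : α} {c : β → M} {p : α × β}
    (hp : onVerticalLine t c p ≠ 0) : p.1 = t :=
  by_contra fun h => hp (if_neg h)

theorem onVerticalLine_eq_of_support {z : α × β → M} {t : α} (hz : ∀ p, z p ≠ 0 → p.1 = t) :
    onVerticalLine t (fun y => z (t, y)) = z := by
  funext ⟨x, y⟩
  by_cases hx : x = t
  · subst hx
    simp [onVerticalLine]
  · simp only [onVerticalLine, hx, if_false]
    exact (not_imp_comm.1 (hz (x, y)) hx).symm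

theorem card_filter_exists_vertical_line [Fintype α] [Fintype β] [DecidableEq β] [Fintype M]
    [DecidableEq M] (P : (α × β → M) → Prop) [DecidablePred P] (hP : ¬P 0) :
    #{z | P z ∧ ∃ t, ∀ p, z p ≠ 0 → p.1 = t} = ∑ t, #{c : β → M | P (onVerticalLine t c)} := by
  have hunion : ({z | P z ∧ ∃ t, ∀ p, z p ≠ 0 → p.1 = t} : Finset (α × β → M)) =
      univ.biUnion fun t =>
        ({c | P (onVerticalLine t c)} : Finset _).image (onVerticalLine t) := by
    ext z
    simp only [mem_filter, mem_univ, true_and, mem_biUnion, mem_image]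
    constructor
    · rintro ⟨hz, t, ht⟩
      exact ⟨t, _, (onVerticalLine_eq_of_support ht).symm ▸ hz, onVerticalLine_eq_of_support ht⟩
    · rintro ⟨t, c, hc, rfl⟩
      exact ⟨hc, t, fun p => fst_eq_of_onVerticalLine_ne_zero⟩
  rw [hunion, card_biUnion]
  · exact sum_congr rfl fun t _ => card_image_of_injective _ (onVerticalLine_injective t)
  · intro t _ t' _ hne
    refine disjoint_left.2 fun z hz hz' => ?_
    simp only [mem_image, mem_filter, mem_univ, true_and] at hz hz'
    obtain ⟨c, hc, rfl⟩ := hz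
    obtain ⟨c', -, hcc'⟩ := hz'
    obtain ⟨p, hp⟩ := Function.ne_iff.1 (ne_of_apply_ne P fun h => hP (h ▸ hc))
    exact hne ((fst_eq_of_onVerticalLine_ne_zero hp).symm.trans
      (fst_eq_of_onVerticalLine_ne_zero (hcc' ▸ hp)))

end VerticalLine

theorem sum_onVerticalLine_mul_pow_mul_pow {R : Type*} [CommSemiring R] [Fintype R]
    [DecidableEq R] (t : R) (c : R → R) (r s : ℕ) :
    ∑ p : R × R, onVerticalLine t c p * p.1 ^ r * p.2 ^ s = t ^ r * ∑ y, c y * y ^ s := by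
  rw [Fintype.sum_prod_type, Fintype.sum_eq_single t fun x hx => by simp [onVerticalLine, hx],
    mul_sum]
  refine sum_congr rfl fun y _ => ?_
  simp only [onVerticalLine, if_true]
  ring

section HermitianCode

variable {F : Type*} [Field F] [Fintype F] [DecidableEq F]

theorem hermitianWeight_onVerticalLine (t : F) (c : F → F) :
    hermitianWeight (onVerticalLine t c) = #{y | c y ≠ 0} := by
  rw [hermitianWeight, ← card_map (Function.Embedding.sectR t F)]
  congr 1
  ext ⟨x, y⟩
  by_cases hx : x = t <;> simp [onVerticalLine, hx, eq_comm, and_comm]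

theorem hermitianCodeword_onVerticalLine_iff {q d j : ℕ} (hd : 2 ≤ d) (hj : j ≤ d - 1) (t : F)
    (c : F → F) :
    hermitianCodeword q d j (onVerticalLine t c) ↔
      (∀ y, c y ≠ 0 → t ^ (q + 1) = y ^ q + y) ∧ ∀ s < d - 1, ∑ y, c y * y ^ s = 0 := by
  have hcurve : (∀ p : F × F, p.1 ^ (q + 1) ≠ p.2 ^ q + p.2 → onVerticalLine t c p = 0) ↔
      ∀ y, c y ≠ 0 → t ^ (q + 1) = y ^ q + y := by
    refine ⟨fun h y hy => by_contra fun hc => hy (by simpa [onVerticalLine] using h (t, y) hc),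
      fun h p hp => ?_⟩
    by_cases hx : p.1 = t
    · simp only [onVerticalLine, hx, if_true]
      exact by_contra fun hc => hp (hx ▸ h p.2 hc)
    · simp [onVerticalLine, hx]
  rw [hermitianCodeword, hcurve]
  refine and_congr_right fun hc => ?_
  have hsum : ∀ r s : ℕ,
      ∑ p ∈ univ.filter (fun p : F × F => p.1 ^ (q + 1) = p.2 ^ q + p.2),
        onVerticalLine t c p * p.1 ^ r * p.2 ^ s = t ^ r * ∑ y, c y * y ^ s := by
    intro r s
    rw [sum_filter_of_ne, sum_onVerticalLine_mul_pow_mul_pow]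
    intro p _ hp
    by_cases hx : p.1 = t
    · simp only [onVerticalLine, hx, if_true] at hp ⊢
      exact hc _ (left_ne_zero_of_mul (left_ne_zero_of_mul hp))
    · simp [onVerticalLine, hx] at hp
  simp only [hsum]
  constructor
  · intro h s hs
    simpa using h 0 s (.inl (by omega))
  · intro h r s hrs
    rw [h s (by omega), mul_zero]

open scoped Classical in
theorem card_filter_onVerticalLine_codeword {q d j : ℕ} (hq : IsPrimePow q) (hd : 2 ≤ d)
    (hj : j ≤ d - 1) (hF : Fintype.card F = q ^ 2) (t : F) :
    #{c : F → F | hermitianCodeword q d j (onVerticalLine t c) ∧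
        hermitianWeight (onVerticalLine t c) = d + 1} =
      q.choose (d + 1) * (q ^ 4 - (d + 1) * q ^ 2 + d) := by
  obtain ⟨k, rfl⟩ : ∃ k, d = k + 1 := ⟨d - 1, by omega⟩
  calc _ = #{c : F → F | (∀ y, c y ≠ 0 → y ∈ ({y | t ^ (q + 1) = y ^ q + y} : Finset F)) ∧
        #{y | c y ≠ 0} = k + 2 ∧ ∀ s < k, ∑ y, c y * y ^ s = 0} := by
        refine congrArg card (filter_congr fun c _ => ?_)
        rw [hermitianCodeword_onVerticalLine_iff hd hj, hermitianWeight_onVerticalLine,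
          Nat.add_sub_cancel]
        simp only [mem_filter, mem_univ, true_and]
        tauto
    _ = _ := card_filter_support_subset_of_card_eq_add_two _ k
    _ = _ := by rw [card_filter_hermitian_fiber hq hF t, hF, ← pow_mul]

end HermitianCode

theorem stmt_17_general (q d j : ℕ) (hq : IsPrimePow q) (hd : 2 ≤ d)
    (hj : j ≤ d - 1)
    (F : Type*) [Field F] [Fintype F] [DecidableEq F] (hF : Fintype.card F = q ^ 2) :
    Nat.card {z : F × F → F // hermitianCodeword q d j z ∧ hermitianWeight z = d + 1 ∧
        ∃ t : F, ∀ p : F × F, z p ≠ 0 → p.1 = t}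
      = q ^ 2 * (q ^ 4 - (d + 1) * q ^ 2 + d) * Nat.choose q (d + 1) := by
  classical
  rw [Nat.card_eq_fintype_card, Fintype.card_subtype]
  simp_rw [← and_assoc]
  rw [card_filter_exists_vertical_line _ (by simp [hermitianWeight]),
    sum_congr rfl fun t _ => card_filter_onVerticalLine_codeword hq hd hj hF t, sum_const,
    card_univ, hF, smul_eq_mul, mul_assoc, mul_comm (Nat.choose _ _)]

theorem stmt_17 (q d j : ℕ) (hq : IsPrimePow q) (hd : 2 ≤ d) (hdq : d ≤ q)
    (hj : j ≤ d - 1)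
    (F : Type*) [Field F] [Fintype F] [DecidableEq F] (hF : Fintype.card F = q ^ 2) :
    Nat.card {z : F × F → F // hermitianCodeword q d j z ∧ hermitianWeight z = d + 1 ∧
        ∃ t : F, ∀ p : F × F, z p ≠ 0 → p.1 = t}
      = q ^ 2 * (q ^ 4 - (d + 1) * q ^ 2 + d) * Nat.choose q (d + 1) :=
  stmt_17_general q d j hq hd hj F hF
end
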